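/- Let a > 0 and let τ be an integer with τ ≥ log(1/δ)/a + Δ for some positive integer Δ and δ ∈ (0,1]. If X is drawn from the truncated discrete Laplace distribution DLap_τ(a) (supported on integers in [-τ, τ] with mass at x proportional to e^{-a|x|}), then Pr[X > τ - Δ] ≤ δ. -/

import Mathlib

noncomputable def prob {Ω : Type*} (P : Ω → ℝ) (W : Set Ω) : ℝ := ∑' ω, W.indicator P ω

def Indist {Ω : Type*} (ε δ : ℝ) (P Q : Ω → ℝ) : Prop :=
  ∀ W : Set Ω, prob P W ≤ Real.exp ε * prob Q W + δ ∧ prob Q W ≤ Real.exp ε * prob P W + δ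

noncomputable def dlapTrunc (a : ℝ) (τ : ℤ) (x : ℤ) : ℝ :=
  if |x| ≤ τ then
    Real.exp (-a * |(x : ℝ)|) / (∑ y ∈ Finset.Icc (-τ) τ, Real.exp (-a * |(y : ℝ)|))
  else 0

noncomputable def dlap (a : ℝ) (x : ℤ) : ℝ :=
  Real.exp (-a * |(x : ℝ)|) * (Real.exp a - 1) / (Real.exp a + 1)

/-! Above a threshold `t ≥ 0`, the unnormalised tail mass `∑_{x=t+1}^{τ} e^{-a x}` is
`e^{-a(t+1)}` times a partial sum of the normaliser, so the tail probability is at most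
`e^{-a(t+1)}`. For `t = τ - Δ ≥ log(1/δ)/a` this is at most `δ`. -/

open Finset Real

lemma dlapTrunc_normalizer_pos (a : ℝ) {τ : ℤ} (hτ : 0 ≤ τ) :
    0 < ∑ y ∈ Icc (-τ) τ, exp (-a * |(y : ℝ)|) :=
  sum_pos (fun _ _ ↦ exp_pos _) ⟨0, by simpa using hτ⟩

lemma prob_dlapTrunc_Ioi (a : ℝ) (τ : ℤ) {t : ℤ} (ht : 0 ≤ t) :
    prob (dlapTrunc a τ) {x | t < x} =
      (∑ x ∈ Icc (t + 1) τ, exp (-a * x)) / ∑ y ∈ Icc (-τ) τ, exp (-a * |(y : ℝ)|) := by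
  rw [prob, sum_div, tsum_eq_sum (s := Icc (t + 1) τ)]
  · refine sum_congr rfl fun x hx ↦ ?_
    rw [mem_Icc] at hx
    rw [Set.indicator_of_mem (Set.mem_ofPred.mpr (by omega : t < x)), dlapTrunc,
      if_pos (abs_le.mpr ⟨by omega, hx.2⟩), abs_of_nonneg (by exact_mod_cast (by omega : 0 ≤ x))]
  · intro x hx
    rw [mem_Icc, not_and_or, not_le, not_le] at hx
    rcases hx with hx | hx
    · exact Set.indicator_of_notMem (show ¬ t < x by omega) _
    · rw [Set.indicator_apply, dlapTrunc, if_neg (not_le.mpr (hx.trans_le (le_abs_self x)))]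
      exact ite_self 0

lemma sum_Icc_exp_neg_mul_eq (a : ℝ) (s τ : ℤ) :
    ∑ x ∈ Icc s τ, exp (-a * x) = exp (-a * s) * ∑ y ∈ Icc 0 (τ - s), exp (-a * y) := by
  have hshift : Icc s τ = (Icc 0 (τ - s)).map (addRightEmbedding s) := by simp
  rw [hshift, sum_map, mul_sum]
  refine sum_congr rfl fun y _ ↦ ?_
  rw [addRightEmbedding_apply, ← exp_add]
  push_cast
  ring_nf

lemma prob_dlapTrunc_Ioi_le (a : ℝ) (τ : ℤ) {t : ℤ} (ht : 0 ≤ t) :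
    prob (dlapTrunc a τ) {x | t < x} ≤ exp (-a * (t + 1)) := by
  rcases lt_or_ge τ 0 with hτ | hτ
  · rw [prob_dlapTrunc_Ioi a τ ht, Icc_eq_empty (by omega), sum_empty, zero_div]
    positivity
  rw [prob_dlapTrunc_Ioi a τ ht, div_le_iff₀ (dlapTrunc_normalizer_pos a hτ),
    sum_Icc_exp_neg_mul_eq, Int.cast_add, Int.cast_one]
  gcongr
  calc ∑ y ∈ Icc 0 (τ - (t + 1)), exp (-a * y)
      = ∑ y ∈ Icc 0 (τ - (t + 1)), exp (-a * |(y : ℝ)|) :=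
        sum_congr rfl fun y hy ↦ by
          rw [abs_of_nonneg (by exact_mod_cast (mem_Icc.mp hy).1)]
    _ ≤ ∑ y ∈ Icc (-τ) τ, exp (-a * |(y : ℝ)|) :=
        sum_le_sum_of_subset_of_nonneg (fun y hy ↦ by rw [mem_Icc] at hy ⊢; omega)
          fun _ _ _ ↦ (exp_pos _).le

theorem truncated_dlap_tail_general (a : ℝ) (ha : 0 < a) (τ Δ : ℤ)
    (δ : ℝ) (hδ0 : 0 < δ) (hδ1 : δ ≤ 1)
    (hτ : Real.log (1 / δ) / a + (Δ : ℝ) ≤ (τ : ℝ)) :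
    prob (dlapTrunc a τ) {x : ℤ | τ - Δ < x} ≤ δ := by
  have hlog : log (1 / δ) ≤ a * (τ - Δ) := by
    rw [← div_le_iff₀' ha]; linarith
  have hgap : 0 ≤ τ - Δ := by
    have : 0 ≤ log (1 / δ) := log_nonneg (by rw [le_div_iff₀ hδ0]; linarith)
    exact_mod_cast nonneg_of_mul_nonneg_right (this.trans hlog) ha
  calc prob (dlapTrunc a τ) {x : ℤ | τ - Δ < x}
      ≤ exp (-a * ((τ - Δ : ℤ) + 1)) := prob_dlapTrunc_Ioi_le a τ hgap
    _ ≤ exp (-log (1 / δ)) := by gcongr; push_cast; nlinarith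
    _ = δ := by rw [exp_neg, exp_log (by positivity), one_div, inv_inv]

theorem truncated_dlap_tail (a : ℝ) (ha : 0 < a) (τ Δ : ℤ) (hΔ : 1 ≤ Δ)
    (δ : ℝ) (hδ0 : 0 < δ) (hδ1 : δ ≤ 1)
    (hτ : Real.log (1 / δ) / a + (Δ : ℝ) ≤ (τ : ℝ)) :
    prob (dlapTrunc a τ) {x : ℤ | τ - Δ < x} ≤ δ :=
  truncated_dlap_tail_general a ha τ Δ δ hδ0 hδ1 hτ
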